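/- Under the standing assumptions, there exists C > 0 such that for every f : V → ℂ with ‖f‖_{BMO_1} < ∞ and every g ∈ H^1_fin(m), i.e. every finite linear combination g = Σ_{j=1}^N λ_j a_j of (1,∞)-atoms a_j, one has |∫_V f·g dm| ≤ C·‖f‖_{BMO_1}·‖g‖_{H^{1,∞}}. -/

import Mathlib

open scoped ENNReal NNReal BigOperators

universe u

namespace FlowPaper

/-- A tree rooted at infinity: vertex set `V`, level function `lvl`, predecessor `pred`. -/
structure Tree (V : Type u) where
  lvl : V → ℤ
  pred : V → V
  lvl_pred : ∀ x, lvl (pred x) = lvl x + 1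
  sons_fin : ∀ x, {y : V | pred y = x}.Finite
  sons_ne : ∀ x, ∃ y, pred y = x
  conn : ∀ x y, ∃ k l : ℕ, pred^[k] x = pred^[l] y

variable {V : Type u}

namespace Tree

/-- The (finite) set of sons of a vertex. -/
noncomputable def sons (T : Tree V) (x : V) : Finset V := (T.sons_fin x).toFinset

/-- The number of sons `q(x)` of a vertex. -/
noncomputable def deg (T : Tree V) (x : V) : ℕ := (T.sons x).card

/-- The partial order: `x ≤ y` iff `y` is an iterated predecessor of `x`. -/
def Le (T : Tree V) (x y : V) : Prop := ∃ k : ℕ, T.pred^[k] x = y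

/-- The geodesic distance: the least `k + l` with `p^[k] x = p^[l] y`. -/
noncomputable def dist (T : Tree V) (x y : V) : ℕ :=
  sInf {n : ℕ | ∃ k l : ℕ, k + l = n ∧ T.pred^[k] x = T.pred^[l] y}

/-- The closed ball of radius `r` about `x`. -/
def ball (T : Tree V) (x : V) (r : ℕ) : Set V := {y | T.dist x y ≤ r}

/-- The sphere of radius `r` about `x`. -/
def sphere (T : Tree V) (x : V) (r : ℕ) : Set V := {y | T.dist x y = r}

/-- Adjacency: `x ~ y` iff one is the predecessor of the other. -/
def Adj (T : Tree V) (x y : V) : Prop := T.pred x = y ∨ T.pred y = x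

/-- The trapezoid `R_{h1}^{h2}(x0)`. -/
def trap (T : Tree V) (x0 : V) (h1 h2 : ℕ) : Set V :=
  {x | T.Le x x0 ∧ T.lvl x0 - h2 < T.lvl x ∧ T.lvl x ≤ T.lvl x0 - h1}

end Tree

/-- The measure of a subset of vertices. -/
noncomputable def mst (m : V → ℝ≥0∞) (A : Set V) : ℝ≥0∞ := ∑' x : A, m x

/-- `m` is a flow measure: positive, finite at each vertex, and the value at a
vertex is the sum of the values at its sons. -/
structure IsFlow (T : Tree V) (m : V → ℝ≥0∞) : Prop where
  pos : ∀ x, 0 < m x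
  fin : ∀ x, m x < ⊤
  flow : ∀ x, m x = ∑ y ∈ T.sons x, m y

/-- `m` is locally doubling. -/
def LocDoubling (T : Tree V) (m : V → ℝ≥0∞) : Prop :=
  ∀ r : ℕ, 0 < r → ∃ C : ℝ, 1 < C ∧
    ∀ x : V, mst m (T.ball x (2 * r)) ≤ ENNReal.ofReal C * mst m (T.ball x r)

/-- `m` is (globally) doubling. -/
def Doubling (T : Tree V) (m : V → ℝ≥0∞) : Prop :=
  ∃ C : ℝ, 1 < C ∧ ∀ (r : ℕ) (x : V), 0 < r →
    mst m (T.ball x (2 * r)) ≤ ENNReal.ofReal C * mst m (T.ball x r)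

/-- Admissible trapezoid (with respect to the parameter `β`): a singleton, or a
trapezoid `R_{h1}^{h2}(x)` with `2 ≤ h2 / h1 ≤ β`. -/
def IsAdmissible (T : Tree V) (β : ℝ) (R : Set V) : Prop :=
  (∃ x : V, R = {x}) ∨
  ∃ (x : V) (h1 h2 : ℕ), 1 ≤ h1 ∧ 2 * h1 ≤ h2 ∧ (h2 : ℝ) ≤ β * h1 ∧ R = T.trap x h1 h2

/-- `∫_A |f| dm`. -/
noncomputable def intNN (m : V → ℝ≥0∞) (A : Set V) (f : V → ℂ) : ℝ≥0∞ :=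
  ∑' x : A, (‖f x‖₊ : ℝ≥0∞) * m x

/-- `∫_A f dm`. -/
noncomputable def intC (m : V → ℝ≥0∞) (A : Set V) (f : V → ℂ) : ℂ :=
  ∑' x : A, f x * ((m x).toReal : ℂ)

/-- The average `f_A = (1/m(A)) ∫_A f dm`. -/
noncomputable def avg (m : V → ℝ≥0∞) (A : Set V) (f : V → ℂ) : ℂ :=
  intC m A f / (((mst m A).toReal : ℝ) : ℂ)

/-- `L^p` norm of an `ℝ≥0∞`-valued function, `0 < p < ∞`. -/
noncomputable def lpNormE (m : V → ℝ≥0∞) (p : ℝ) (g : V → ℝ≥0∞) : ℝ≥0∞ :=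
  (∑' x : V, g x ^ p * m x) ^ (1 / p)

/-- `L^p` norm, `0 < p < ∞`. -/
noncomputable def lpNorm (m : V → ℝ≥0∞) (p : ℝ) (f : V → ℂ) : ℝ≥0∞ :=
  lpNormE m p (fun x => (‖f x‖₊ : ℝ≥0∞))

/-- `L^∞` norm. -/
noncomputable def linfNorm (f : V → ℂ) : ℝ≥0∞ := ⨆ x : V, (‖f x‖₊ : ℝ≥0∞)

/-- The Hardy–Littlewood maximal function associated with admissible trapezoids. -/
noncomputable def maximal (T : Tree V) (β : ℝ) (m : V → ℝ≥0∞) (f : V → ℂ) (x : V) : ℝ≥0∞ :=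
  ⨆ (R : Set V) (_ : IsAdmissible T β R ∧ x ∈ R), (mst m R)⁻¹ * intNN m R f

/-- The `BMO_q` seminorm. -/
noncomputable def oscNorm (T : Tree V) (β : ℝ) (m : V → ℝ≥0∞) (q : ℝ) (f : V → ℂ) : ℝ≥0∞ :=
  ⨆ (R : Set V) (_ : IsAdmissible T β R),
    ((mst m R)⁻¹ * ∑' x : R, (‖f x - avg m R f‖₊ : ℝ≥0∞) ^ q * m x) ^ (1 / q)

/-- The sharp maximal function. -/
noncomputable def sharpMaximal (T : Tree V) (β : ℝ) (m : V → ℝ≥0∞) (f : V → ℂ) (x : V) :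
    ℝ≥0∞ :=
  ⨆ (R : Set V) (_ : IsAdmissible T β R ∧ x ∈ R),
    (mst m R)⁻¹ * ∑' y : R, (‖f y - avg m R f‖₊ : ℝ≥0∞) * m y

/-- A `(1,p)`-atom, `1 < p < ∞`. -/
def IsAtomP (T : Tree V) (β : ℝ) (m : V → ℝ≥0∞) (p : ℝ) (a : V → ℂ) : Prop :=
  ∃ R : Set V, IsAdmissible T β R ∧ (∀ x ∉ R, a x = 0) ∧
    lpNorm m p a ≤ (mst m R) ^ (1 / p - 1) ∧ intC m R a = 0

/-- A `(1,∞)`-atom. -/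
def IsAtomInf (T : Tree V) (β : ℝ) (m : V → ℝ≥0∞) (a : V → ℂ) : Prop :=
  ∃ R : Set V, IsAdmissible T β R ∧ (∀ x ∉ R, a x = 0) ∧
    linfNorm a ≤ (mst m R)⁻¹ ∧ intC m R a = 0

/-- An atomic decomposition `f = Σ_j λ_j a_j` converging in `L¹(m)`. -/
def IsDecomp (m : V → ℝ≥0∞) (atom : (V → ℂ) → Prop) (f : V → ℂ)
    (lam : ℕ → ℂ) (a : ℕ → V → ℂ) : Prop :=
  (∀ j, atom (a j)) ∧ Summable (fun j => ‖lam j‖) ∧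
  Filter.Tendsto
    (fun N => lpNorm m 1 (fun x => f x - ∑ j ∈ Finset.range N, lam j * a j x))
    Filter.atTop (nhds (0 : ℝ≥0∞))

/-- The atomic Hardy norm associated with the given class of atoms. -/
noncomputable def hNorm (m : V → ℝ≥0∞) (atom : (V → ℂ) → Prop) (f : V → ℂ) : ℝ≥0∞ :=
  ⨅ (d : {la : (ℕ → ℂ) × (ℕ → V → ℂ) // IsDecomp m atom f la.1 la.2}),
    ENNReal.ofReal (∑' j, ‖d.1.1 j‖)

/-- A (finite) geodesic: pairwise distinct vertices, consecutive ones adjacent. -/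
def IsGeodesic (T : Tree V) (l : List V) : Prop := l.Nodup ∧ l.Chain' T.Adj

/-- The number of vertices with at least two sons along a geodesic. -/
noncomputable def branchCount (T : Tree V) (l : List V) : ℕ :=
  List.countP (fun y => decide (2 ≤ T.deg y)) l

/-- The lower half-ball `B_r^-(x0)`. -/
def lowerBall (T : Tree V) (x0 : V) (r : ℕ) : Set V := {x | T.Le x x0 ∧ T.dist x x0 ≤ r}

/-- The boundary `∂A` of a set of vertices. -/
def bdry (T : Tree V) (A : Set V) : Set V := {x ∈ A | ∃ y ∉ A, T.Adj y x}

/-- Trapezoids as labelled data: a singleton, or the data `(x, h1, h2)`. -/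
inductive TrapZ (V : Type u) where
  | single (x : V)
  | tz (x : V) (h1 h2 : ℕ)

namespace TrapZ

/-- The vertex set of a labelled trapezoid. -/
def toSet (T : Tree V) : TrapZ V → Set V
  | single x => {x}
  | tz x h1 h2 => T.trap x h1 h2

/-- Admissibility of a labelled trapezoid. -/
def Adm (β : ℝ) : TrapZ V → Prop
  | single _ => True
  | tz _ h1 h2 => 1 ≤ h1 ∧ 2 * h1 ≤ h2 ∧ (h2 : ℝ) ≤ β * h1

/-- The root of a labelled trapezoid. -/
def root : TrapZ V → V
  | single x => x
  | tz x _ _ => x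

end TrapZ

/-- One step of the decomposition algorithm: the family `ℱ(R,1)`. -/
def children (T : Tree V) : TrapZ V → Set (TrapZ V)
  | .single x => {.single x}
  | .tz x h1 h2 =>
    if h1 = 1 ∧ h2 = 2 then {Q | ∃ y ∈ T.sons x, Q = .single y}
    else if (h1 = 1 ∧ h2 = 3) ∨ 4 * h1 ≤ h2 then {.tz x h1 (2 * h1), .tz x (2 * h1) h2}
    else {Q | ∃ y ∈ T.sons x, Q = .tz y (h1 - 1) (h2 - 1)}

/-- `R'` is an output of the expansion algorithm applied to `R`. -/
def IsExpansion (T : Tree V) : TrapZ V → TrapZ V → Prop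
  | .single x, R' => R' = .tz (T.pred x) 1 2
  | .tz x h1 h2, R' =>
    if h1 = 1 ∧ h2 = 2 then R' = .tz (T.pred x) 1 3
    else if 3 * h1 ≤ h2 then R' = .tz (T.pred x) (h1 + 1) (h2 + 1)
    else R' = .tz x h1 (2 * h2) ∨ R' = .tz x (h1 / 2) h2

/-- The dyadic maximal function associated with a family `D` of partitions. -/
noncomputable def dyadicMaximal (m : V → ℝ≥0∞) (D : ℤ → Set (Set V)) (f : V → ℂ) (x : V) :
    ℝ≥0∞ :=
  ⨆ (R : Set V) (_ : (∃ j, R ∈ D j) ∧ x ∈ R), (mst m R)⁻¹ * intNN m R f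

/-- A dyadic family of partitions of `V` into admissible trapezoids. -/
def IsDyadicFamily (T : Tree V) (β : ℝ) (m : V → ℝ≥0∞) (c Ct : ℝ)
    (D : ℤ → Set (Set V)) : Prop :=
  (∀ j, (∀ R ∈ D j, IsAdmissible T β R) ∧ (D j).Pairwise Disjoint ∧ ⋃₀ (D j) = Set.univ) ∧
  (∀ j k : ℤ, j < k → ∀ R ∈ D j, ∀ R' ∈ D k, R ⊆ R' ∨ R ∩ R' = ∅) ∧
  (∀ j, ∀ R ∈ D j, ∃! R', R' ∈ D (j + 1) ∧ R ⊆ R') ∧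
  (∀ j, ∀ R ∈ D j, ∀ R' ∈ D (j + 1), R ⊆ R' → mst m R' ≤ ENNReal.ofReal Ct * mst m R) ∧
  (∀ j, ∀ R ∈ D j, ∃ F : Finset (Set V), ↑F ⊆ D (j - 1) ∧ (F.card : ℝ) ≤ c ∧ R = ⋃₀ ↑F) ∧
  (∀ x : V, ∃ k : ℤ, ∀ j ≤ k, {x} ∈ D j)

end FlowPaper

namespace FlowPaper


section AuxProof

variable {V : Type u}

/-! ### Tree-structure lemmas -/

lemma lvl_iterate (T : Tree V) (x : V) : ∀ k : ℕ, T.lvl (T.pred^[k] x) = T.lvl x + k := by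
  intro k
  induction k with
  | zero => simp
  | succ n ih =>
      rw [Function.iterate_succ_apply', T.lvl_pred, ih]
      push_cast; ring

lemma desc_finite (T : Tree V) (x0 : V) : ∀ k : ℕ, {x | T.pred^[k] x = x0}.Finite := by
  intro k
  induction k with
  | zero => simpa using Set.finite_singleton x0
  | succ n ih =>
      have hsub : {x | T.pred^[n+1] x = x0} ⊆
          ⋃ y ∈ {x | T.pred^[n] x = x0}, {z | T.pred z = y} := by
        intro x hx
        simp only [Set.mem_iUnion, Set.mem_setOf_eq]
        exact ⟨T.pred x, by simpa [Function.iterate_succ_apply] using hx, rfl⟩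
      exact (ih.biUnion (fun y _ => T.sons_fin y)).subset hsub

lemma desc_nonempty (T : Tree V) (x0 : V) : ∀ k : ℕ, ∃ y, T.pred^[k] y = x0 := by
  intro k
  induction k with
  | zero => exact ⟨x0, rfl⟩
  | succ n ih =>
      obtain ⟨y, hy⟩ := ih
      obtain ⟨z, hz⟩ := T.sons_ne y
      exact ⟨z, by rw [Function.iterate_succ_apply, hz, hy]⟩

lemma trap_finite (T : Tree V) (x0 : V) (h1 h2 : ℕ) : (T.trap x0 h1 h2).Finite := by
  have hsub : T.trap x0 h1 h2 ⊆ ⋃ k ∈ Finset.range h2, {x | T.pred^[k] x = x0} := by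
    rintro x ⟨⟨k, hk⟩, hlow, _⟩
    have hl : T.lvl x0 = T.lvl x + k := by rw [← hk, lvl_iterate]
    have hk2' : (k : ℤ) < h2 := by omega
    have hk2 : k < h2 := by exact_mod_cast hk2'
    simp only [Set.mem_iUnion, Set.mem_setOf_eq]
    exact ⟨k, Finset.mem_range.2 hk2, hk⟩
  exact (Set.Finite.biUnion (Finset.range h2).finite_toSet
    (fun k _ => desc_finite T x0 k)).subset hsub

lemma trap_nonempty (T : Tree V) (x0 : V) {h1 h2 : ℕ} (h : h1 < h2) :
    (T.trap x0 h1 h2).Nonempty := by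
  obtain ⟨y, hy⟩ := desc_nonempty T x0 h1
  have hl : T.lvl x0 = T.lvl y + h1 := by rw [← hy, lvl_iterate]
  have h' : (h1 : ℤ) < h2 := by exact_mod_cast h
  exact ⟨y, ⟨h1, hy⟩, by omega, by omega⟩

lemma adm_finite (T : Tree V) {β : ℝ} {R : Set V} (h : IsAdmissible T β R) : R.Finite := by
  rcases h with ⟨x, rfl⟩ | ⟨x, h1, h2, _, _, _, rfl⟩
  · exact Set.finite_singleton x
  · exact trap_finite T x h1 h2

lemma adm_nonempty (T : Tree V) {β : ℝ} {R : Set V} (h : IsAdmissible T β R) : R.Nonempty := by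
  rcases h with ⟨x, rfl⟩ | ⟨x, h1, h2, hh1, hh2, _, rfl⟩
  · exact ⟨x, rfl⟩
  · exact trap_nonempty T x (by omega)

/-! ### Sums over finite sets -/

lemma tsum_set_eq_sum {M : Type} [AddCommMonoid M] [TopologicalSpace M]
    (f : V → M) {R : Set V} (hR : R.Finite) :
    ∑' x : R, f ↑x = ∑ x ∈ hR.toFinset, f x := by
  conv_lhs => rw [← hR.coe_toFinset]
  exact Finset.tsum_subtype hR.toFinset f

lemma mst_eq_sum (m : V → ℝ≥0∞) {R : Set V} (hR : R.Finite) :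
    mst m R = ∑ x ∈ hR.toFinset, m x :=
  tsum_set_eq_sum m hR

lemma intC_eq_sum (m : V → ℝ≥0∞) (f : V → ℂ) {R : Set V} (hR : R.Finite) :
    intC m R f = ∑ x ∈ hR.toFinset, f x * ((m x).toReal : ℂ) :=
  tsum_set_eq_sum (fun x => f x * ((m x).toReal : ℂ)) hR

variable {T : Tree V} {m : V → ℝ≥0∞}

lemma mst_ne_top (hm : IsFlow T m) {R : Set V} (hR : R.Finite) : mst m R ≠ ⊤ := by
  rw [mst_eq_sum m hR]
  exact (ENNReal.sum_lt_top.2 (fun x _ => hm.fin x)).ne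

lemma mst_ne_zero (hm : IsFlow T m) {R : Set V} (hne : R.Nonempty) : mst m R ≠ 0 := by
  obtain ⟨x, hx⟩ := hne
  have h1 : m x ≤ mst m R := ENNReal.le_tsum (⟨x, hx⟩ : R)
  exact fun h0 => ((hm.pos x).trans_le h1).ne' (by rw [h0])

lemma mst_toReal_pos (hm : IsFlow T m) {R : Set V} (hR : R.Finite) (hne : R.Nonempty) :
    0 < (mst m R).toReal :=
  ENNReal.toReal_pos (mst_ne_zero hm hne) (mst_ne_top hm hR)

lemma mst_toReal_eq_sum (hm : IsFlow T m) {R : Set V} (hR : R.Finite) :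
    (mst m R).toReal = ∑ x ∈ hR.toFinset, (m x).toReal := by
  rw [mst_eq_sum m hR]
  exact ENNReal.toReal_sum (fun x _ => (hm.fin x).ne)

/-! ### Averages -/

lemma avg_dist_le (hm : IsFlow T m) {R : Set V} (hR : R.Finite) (hne : R.Nonempty)
    (ψ : V → ℂ) (c' : ℂ) :
    ‖avg m R ψ - c'‖ * (mst m R).toReal ≤
      ∑ x ∈ hR.toFinset, ‖ψ x - c'‖ * (m x).toReal := by
  set S : ℝ := (mst m R).toReal with hS
  have hSpos : 0 < S := mst_toReal_pos hm hR hne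
  have hSsum : S = ∑ x ∈ hR.toFinset, (m x).toReal := mst_toReal_eq_sum hm hR
  have hnum : intC m R ψ - c' * (S : ℂ) =
      ∑ x ∈ hR.toFinset, (ψ x - c') * ((m x).toReal : ℂ) := by
    rw [intC_eq_sum m ψ hR, hSsum]
    push_cast
    rw [Finset.mul_sum, ← Finset.sum_sub_distrib]
    exact Finset.sum_congr rfl (fun x _ => by ring)
  have havg : avg m R ψ - c' =
      (∑ x ∈ hR.toFinset, (ψ x - c') * ((m x).toReal : ℂ)) / (S : ℂ) := by
    rw [← hnum, avg, ← hS]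
    have hS0 : (S : ℂ) ≠ 0 := by exact_mod_cast hSpos.ne'
    field_simp
  rw [havg, norm_div]
  have hnS : ‖((S : ℝ) : ℂ)‖ = S := by
    rw [Complex.norm_real, Real.norm_eq_abs, abs_of_pos hSpos]
  rw [hnS, div_mul_cancel₀ _ hSpos.ne']
  calc ‖∑ x ∈ hR.toFinset, (ψ x - c') * ((m x).toReal : ℂ)‖
      ≤ ∑ x ∈ hR.toFinset, ‖(ψ x - c') * ((m x).toReal : ℂ)‖ := norm_sum_le _ _
    _ = ∑ x ∈ hR.toFinset, ‖ψ x - c'‖ * (m x).toReal := by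
        refine Finset.sum_congr rfl (fun x _ => ?_)
        rw [norm_mul, Complex.norm_real, Real.norm_eq_abs,
          abs_of_nonneg ENNReal.toReal_nonneg]

/-! ### The local oscillation bound -/

/-- `φ` has `L¹`-oscillation at most `K` on every admissible trapezoid. -/
def PerR (T : Tree V) (β : ℝ) (m : V → ℝ≥0∞) (φ : V → ℂ) (K : ℝ) : Prop :=
  ∀ R : Set V, IsAdmissible T β R → ∀ hR : R.Finite,
    ∑ x ∈ hR.toFinset, ‖φ x - avg m R φ‖ * (m x).toReal ≤ K * (mst m R).toReal

lemma perR_of_osc (hm : IsFlow T m) {β : ℝ} (f : V → ℂ)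
    (hf : oscNorm T β m 1 f ≠ ⊤) :
    PerR T β m f (oscNorm T β m 1 f).toReal := by
  intro R hadm hR
  have hne : R.Nonempty := adm_nonempty T hadm
  set S : ℝ≥0∞ := ∑' x : R, (‖f ↑x - avg m R f‖₊ : ℝ≥0∞) * m ↑x with hSdef
  have hterm : ((mst m R)⁻¹ * S : ℝ≥0∞) ≤ oscNorm T β m 1 f := by
    have h := le_iSup₂ (f := fun (R' : Set V) (_ : IsAdmissible T β R') =>
      ((mst m R')⁻¹ * ∑' x : R', (‖f ↑x - avg m R' f‖₊ : ℝ≥0∞) ^ (1:ℝ) * m ↑x) ^ ((1:ℝ)/1))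
      R hadm
    simpa [ENNReal.rpow_one, oscNorm] using h
  have hmne0 : mst m R ≠ 0 := mst_ne_zero hm hne
  have hmnetop : mst m R ≠ ⊤ := mst_ne_top hm hR
  have hSle : S ≤ mst m R * oscNorm T β m 1 f := by
    calc S = mst m R * ((mst m R)⁻¹ * S) := by
          rw [← mul_assoc, ENNReal.mul_inv_cancel hmne0 hmnetop, one_mul]
      _ ≤ mst m R * oscNorm T β m 1 f := by gcongr
  have htr := ENNReal.toReal_mono (ENNReal.mul_ne_top hmnetop hf) hSle
  rw [ENNReal.toReal_mul] at htr
  have hSval : S.toReal = ∑ x ∈ hR.toFinset, ‖f x - avg m R f‖ * (m x).toReal := by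
    rw [hSdef, tsum_set_eq_sum (fun x => (‖f x - avg m R f‖₊ : ℝ≥0∞) * m x) hR,
      ENNReal.toReal_sum (fun x _ => ENNReal.mul_ne_top ENNReal.coe_ne_top (hm.fin x).ne)]
    exact Finset.sum_congr rfl (fun x _ => by
      rw [ENNReal.toReal_mul, ENNReal.coe_toReal, coe_nnnorm])
  rw [hSval] at htr
  calc ∑ x ∈ hR.toFinset, ‖f x - avg m R f‖ * (m x).toReal
      ≤ (mst m R).toReal * (oscNorm T β m 1 f).toReal := htr
    _ = (oscNorm T β m 1 f).toReal * (mst m R).toReal := by ring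

/-! ### Truncation -/

/-- Truncation of a complex number: clamp real and imaginary parts to `[-k, k]`. -/
noncomputable def trunc (k : ℝ) (z : ℂ) : ℂ :=
  ((z.re ⊓ k ⊔ (-k) : ℝ) : ℂ) + ((z.im ⊓ k ⊔ (-k) : ℝ) : ℂ) * Complex.I

lemma clamp_lip (k a b : ℝ) : |(a ⊓ k ⊔ (-k)) - (b ⊓ k ⊔ (-k))| ≤ |a - b| :=
  (abs_sup_sub_sup_le_abs _ _ _).trans (abs_inf_sub_inf_le_abs _ _ _)

lemma clamp_mem {k t : ℝ} (hk : 0 ≤ k) : |t ⊓ k ⊔ (-k)| ≤ k := by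
  rw [abs_le]
  constructor
  · exact le_sup_right
  · exact sup_le (inf_le_right) (by linarith)

lemma clamp_fix {k t : ℝ} (h1 : -k ≤ t) (h2 : t ≤ k) : t ⊓ k ⊔ (-k) = t := by
  rw [inf_eq_left.2 h2, sup_eq_left.2 h1]

lemma trunc_lip (k : ℝ) (z w : ℂ) : ‖trunc k z - trunc k w‖ ≤ 2 * ‖z - w‖ := by
  have h1 : trunc k z - trunc k w =
      (((z.re ⊓ k ⊔ (-k)) - (w.re ⊓ k ⊔ (-k)) : ℝ) : ℂ) +
      (((z.im ⊓ k ⊔ (-k)) - (w.im ⊓ k ⊔ (-k)) : ℝ) : ℂ) * Complex.I := by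
    rw [trunc, trunc]; push_cast; ring
  rw [h1]
  calc ‖(((z.re ⊓ k ⊔ (-k)) - (w.re ⊓ k ⊔ (-k)) : ℝ) : ℂ) +
      (((z.im ⊓ k ⊔ (-k)) - (w.im ⊓ k ⊔ (-k)) : ℝ) : ℂ) * Complex.I‖
      ≤ ‖(((z.re ⊓ k ⊔ (-k)) - (w.re ⊓ k ⊔ (-k)) : ℝ) : ℂ)‖ +
        ‖(((z.im ⊓ k ⊔ (-k)) - (w.im ⊓ k ⊔ (-k)) : ℝ) : ℂ) * Complex.I‖ := norm_add_le _ _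
    _ = |(z.re ⊓ k ⊔ (-k)) - (w.re ⊓ k ⊔ (-k))| + |(z.im ⊓ k ⊔ (-k)) - (w.im ⊓ k ⊔ (-k))| := by
        rw [norm_mul, Complex.norm_I, mul_one, Complex.norm_real, Complex.norm_real,
          Real.norm_eq_abs, Real.norm_eq_abs]
    _ ≤ |z.re - w.re| + |z.im - w.im| := add_le_add (clamp_lip _ _ _) (clamp_lip _ _ _)
    _ ≤ ‖z - w‖ + ‖z - w‖ := by
        have ha : |(z - w).re| ≤ ‖z - w‖ := Complex.abs_re_le_norm _
        have hb : |(z - w).im| ≤ ‖z - w‖ := Complex.abs_im_le_norm _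
        rw [Complex.sub_re] at ha
        rw [Complex.sub_im] at hb
        exact add_le_add ha hb
    _ = 2 * ‖z - w‖ := by ring

lemma trunc_bound {k : ℝ} (hk : 0 ≤ k) (z : ℂ) : ‖trunc k z‖ ≤ 2 * k := by
  calc ‖trunc k z‖ ≤ ‖((z.re ⊓ k ⊔ (-k) : ℝ) : ℂ)‖ +
      ‖((z.im ⊓ k ⊔ (-k) : ℝ) : ℂ) * Complex.I‖ := norm_add_le _ _
    _ = |z.re ⊓ k ⊔ (-k)| + |z.im ⊓ k ⊔ (-k)| := by
        rw [norm_mul, Complex.norm_I, mul_one, Complex.norm_real, Complex.norm_real,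
          Real.norm_eq_abs, Real.norm_eq_abs]
    _ ≤ k + k := add_le_add (clamp_mem hk) (clamp_mem hk)
    _ = 2 * k := by ring

lemma trunc_fix {k : ℝ} {z : ℂ} (h1 : |z.re| ≤ k) (h2 : |z.im| ≤ k) : trunc k z = z := by
  rw [abs_le] at h1 h2
  rw [trunc, clamp_fix h1.1 h1.2, clamp_fix h2.1 h2.2, Complex.re_add_im]

lemma trunc_perR {β : ℝ} (hm : IsFlow T m) {φ : V → ℂ} {K : ℝ} (hφ : PerR T β m φ K)
    (k : ℝ) : PerR T β m (fun x => trunc k (φ x)) (4 * K) := by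
  intro R hadm hR
  have hne : R.Nonempty := adm_nonempty T hadm
  set ψ : V → ℂ := fun x => trunc k (φ x) with hψ
  set c' : ℂ := trunc k (avg m R φ) with hc'
  set S : ℝ := (mst m R).toReal with hSr
  have hSpos : 0 < S := mst_toReal_pos hm hR hne
  have hSsum : S = ∑ x ∈ hR.toFinset, (m x).toReal := mst_toReal_eq_sum hm hR
  have h2 : ∑ x ∈ hR.toFinset, ‖ψ x - c'‖ * (m x).toReal ≤ 2 * (K * S) := by
    calc ∑ x ∈ hR.toFinset, ‖ψ x - c'‖ * (m x).toReal
        ≤ ∑ x ∈ hR.toFinset, 2 * (‖φ x - avg m R φ‖ * (m x).toReal) := by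
          refine Finset.sum_le_sum (fun x _ => ?_)
          rw [← mul_assoc]
          exact mul_le_mul_of_nonneg_right (trunc_lip k _ _) ENNReal.toReal_nonneg
      _ = 2 * ∑ x ∈ hR.toFinset, ‖φ x - avg m R φ‖ * (m x).toReal := by
          rw [Finset.mul_sum]
      _ ≤ 2 * (K * S) := by
          have := hφ R hadm hR
          linarith
  have h3 : ‖avg m R ψ - c'‖ * S ≤ ∑ x ∈ hR.toFinset, ‖ψ x - c'‖ * (m x).toReal :=
    avg_dist_le hm hR hne ψ c'
  calc ∑ x ∈ hR.toFinset, ‖ψ x - avg m R ψ‖ * (m x).toReal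
      ≤ ∑ x ∈ hR.toFinset, (‖ψ x - c'‖ + ‖c' - avg m R ψ‖) * (m x).toReal := by
        refine Finset.sum_le_sum (fun x _ => ?_)
        exact mul_le_mul_of_nonneg_right (norm_sub_le_norm_sub_add_norm_sub _ _ _)
          ENNReal.toReal_nonneg
    _ = (∑ x ∈ hR.toFinset, ‖ψ x - c'‖ * (m x).toReal) + ‖c' - avg m R ψ‖ * S := by
        rw [hSsum, Finset.mul_sum, ← Finset.sum_add_distrib]
        exact Finset.sum_congr rfl (fun x _ => by ring)
    _ ≤ (∑ x ∈ hR.toFinset, ‖ψ x - c'‖ * (m x).toReal) +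
        ∑ x ∈ hR.toFinset, ‖ψ x - c'‖ * (m x).toReal := by
        have : ‖c' - avg m R ψ‖ = ‖avg m R ψ - c'‖ := norm_sub_rev _ _
        rw [this]
        exact add_le_add le_rfl h3
    _ ≤ 2 * (K * S) + 2 * (K * S) := add_le_add h2 h2
    _ = 4 * K * S := by ring

/-! ### Finite supports -/

lemma atom_supp_fin {β : ℝ} {a : V → ℂ} (ha : IsAtomInf T β m a) :
    (Function.support a).Finite := by
  obtain ⟨R, hadm, hsupp, _, _⟩ := ha
  refine (adm_finite T hadm).subset (fun x hx => ?_)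
  by_contra h
  exact hx (hsupp x h)

lemma comb_supp_fin (lam : ℕ → ℂ) (a : ℕ → V → ℂ) (M : ℕ)
    (h : ∀ j ∈ Finset.range M, (Function.support (a j)).Finite) :
    (Function.support fun x => ∑ j ∈ Finset.range M, lam j * a j x).Finite := by
  refine Set.Finite.subset (Set.Finite.biUnion (Finset.range M).finite_toSet
    (fun j hj => h j (Finset.mem_coe.1 hj))) ?_
  intro x hx
  simp only [Function.mem_support] at hx
  by_contra hc
  apply hx
  simp only [Set.mem_iUnion, Function.mem_support, not_exists] at hc
  push_neg at hc
  refine Finset.sum_eq_zero (fun j hj => ?_)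
  rw [hc j (Finset.mem_coe.2 hj), mul_zero]

/-! ### The atom bound -/

lemma atom_pair {β : ℝ} (hm : IsFlow T m) {φ : V → ℂ} {K : ℝ}
    (hφ : PerR T β m φ K) {a : V → ℂ} (ha : IsAtomInf T β m a) :
    ‖∑' x : V, φ x * a x * ((m x).toReal : ℂ)‖ ≤ K := by
  obtain ⟨R, hadm, hsupp, hlinf, hzero⟩ := ha
  have hR : R.Finite := adm_finite T hadm
  have hne : R.Nonempty := adm_nonempty T hadm
  have hmne0 : mst m R ≠ 0 := mst_ne_zero hm hne
  have hmnetop : mst m R ≠ ⊤ := mst_ne_top hm hR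
  set c : ℂ := avg m R φ with hc
  set Ainv : ℝ := ((mst m R)⁻¹).toReal with hAinv
  have hAnn : 0 ≤ Ainv := ENNReal.toReal_nonneg
  have haleb : ∀ x, ‖a x‖ ≤ Ainv := by
    intro x
    have h1 : (‖a x‖₊ : ℝ≥0∞) ≤ (mst m R)⁻¹ :=
      le_trans (le_iSup (fun y => (‖a y‖₊ : ℝ≥0∞)) x) hlinf
    have h2 := ENNReal.toReal_mono (by simp [ENNReal.inv_ne_top, hmne0]) h1
    rw [hAinv]
    simpa using h2
  have hsum0 : ∑ x ∈ hR.toFinset, a x * ((m x).toReal : ℂ) = 0 := by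
    rw [← intC_eq_sum m a hR]; exact hzero
  have hts : ∑' x : V, φ x * a x * ((m x).toReal : ℂ) =
      ∑ x ∈ hR.toFinset, φ x * a x * ((m x).toReal : ℂ) := by
    refine tsum_eq_sum (fun x hx => ?_)
    have hxR : x ∉ R := fun hmem => hx (hR.mem_toFinset.2 hmem)
    rw [hsupp x hxR, mul_zero, zero_mul]
  have hts2 : ∑ x ∈ hR.toFinset, φ x * a x * ((m x).toReal : ℂ) =
      ∑ x ∈ hR.toFinset, (φ x - c) * a x * ((m x).toReal : ℂ) := by
    have : ∑ x ∈ hR.toFinset, φ x * a x * ((m x).toReal : ℂ) =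
        (∑ x ∈ hR.toFinset, (φ x - c) * a x * ((m x).toReal : ℂ)) +
        c * ∑ x ∈ hR.toFinset, a x * ((m x).toReal : ℂ) := by
      rw [Finset.mul_sum, ← Finset.sum_add_distrib]
      exact Finset.sum_congr rfl (fun x _ => by ring)
    rw [this, hsum0, mul_zero, add_zero]
  rw [hts, hts2]
  calc ‖∑ x ∈ hR.toFinset, (φ x - c) * a x * ((m x).toReal : ℂ)‖
      ≤ ∑ x ∈ hR.toFinset, ‖(φ x - c) * a x * ((m x).toReal : ℂ)‖ := norm_sum_le _ _
    _ ≤ ∑ x ∈ hR.toFinset, Ainv * (‖φ x - c‖ * (m x).toReal) := by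
        refine Finset.sum_le_sum (fun x _ => ?_)
        rw [norm_mul, norm_mul, Complex.norm_real, Real.norm_eq_abs,
          abs_of_nonneg ENNReal.toReal_nonneg]
        calc ‖φ x - c‖ * ‖a x‖ * (m x).toReal
            ≤ ‖φ x - c‖ * Ainv * (m x).toReal := by
              refine mul_le_mul_of_nonneg_right ?_ ENNReal.toReal_nonneg
              exact mul_le_mul_of_nonneg_left (haleb x) (norm_nonneg _)
          _ = Ainv * (‖φ x - c‖ * (m x).toReal) := by ring
    _ = Ainv * ∑ x ∈ hR.toFinset, ‖φ x - c‖ * (m x).toReal := by rw [Finset.mul_sum]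
    _ ≤ Ainv * (K * (mst m R).toReal) := by
        refine mul_le_mul_of_nonneg_left (hφ R hadm hR) hAnn
    _ = K * (Ainv * (mst m R).toReal) := by ring
    _ = K := by
        rw [hAinv, ENNReal.toReal_inv,
          inv_mul_cancel₀ (mst_toReal_pos hm hR hne).ne', mul_one]

end AuxProof


section AuxProof2
variable {V : Type u} {T : Tree V} {m : V → ℝ≥0∞}

/-! ### `L¹` norms with finite support -/

lemma lpNorm_one_toReal (hm : IsFlow T m) (h : V → ℂ) :
    (lpNorm m 1 h).toReal = ∑' x, ‖h x‖ * (m x).toReal := by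
  rw [lpNorm, lpNormE]
  have e1 : (1:ℝ)/1 = 1 := by norm_num
  have e2 : ∀ x : V, ((‖h x‖₊ : ℝ≥0∞)) ^ (1:ℝ) * m x = (‖h x‖₊ : ℝ≥0∞) * m x := fun x => by
    rw [ENNReal.rpow_one]
  rw [e1, ENNReal.rpow_one, tsum_congr e2,
    ENNReal.tsum_toReal_eq (fun x => ENNReal.mul_ne_top ENNReal.coe_ne_top (hm.fin x).ne)]
  exact tsum_congr (fun x => by rw [ENNReal.toReal_mul, ENNReal.coe_toReal, coe_nnnorm])

/-! ### The bound for an arbitrary atomic decomposition -/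

lemma decomp_bound {β : ℝ} (hm : IsFlow T m) (f : V → ℂ)
    (hf : oscNorm T β m 1 f ≠ ⊤) (g : V → ℂ) (hg : (Function.support g).Finite)
    (lam : ℕ → ℂ) (a : ℕ → V → ℂ)
    (hd : IsDecomp m (IsAtomInf T β m) g lam a) :
    ‖∑' x : V, f x * g x * ((m x).toReal : ℂ)‖ ≤
      4 * (oscNorm T β m 1 f).toReal * ∑' j, ‖lam j‖ := by
  obtain ⟨hatoms, hlsum, htend⟩ := hd
  set K : ℝ := (oscNorm T β m 1 f).toReal with hK
  have hK0 : 0 ≤ K := ENNReal.toReal_nonneg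
  have hKf : PerR T β m f K := perR_of_osc hm f hf
  set G : Finset V := hg.toFinset with hG
  set k0 : ℝ := ∑ x ∈ G, ‖f x‖ with hk0
  have hk00 : 0 ≤ k0 := Finset.sum_nonneg (fun x _ => norm_nonneg _)
  set φ : V → ℂ := fun x => trunc k0 (f x) with hφ
  have hφb : ∀ x, ‖φ x‖ ≤ 2 * k0 := fun x => trunc_bound hk00 _
  have hφR : PerR T β m φ (4 * K) := trunc_perR hm hKf k0
  have hasupp : ∀ j, (Function.support (a j)).Finite := fun j => atom_supp_fin (hatoms j)
  set L : ℝ := ∑' j, ‖lam j‖ with hL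
  have hpair_eq : ∑' x : V, f x * g x * ((m x).toReal : ℂ)
      = ∑' x : V, φ x * g x * ((m x).toReal : ℂ) := by
    refine tsum_congr (fun x => ?_)
    by_cases hgx : g x = 0
    · simp [hgx]
    · have hxG : x ∈ G := hg.mem_toFinset.2 hgx
      have h1 : ‖f x‖ ≤ k0 := Finset.single_le_sum (fun y _ => norm_nonneg (f y)) hxG
      have h2 : φ x = f x := trunc_fix
        ((Complex.abs_re_le_norm (f x)).trans h1)
        ((Complex.abs_im_le_norm (f x)).trans h1)
      rw [h2]
  rw [hpair_eq]
  have hsummg : Summable (fun x => φ x * g x * ((m x).toReal : ℂ)) := by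
    refine summable_of_finite_support (hg.subset (fun x hx => ?_))
    simp only [Function.mem_support] at hx ⊢
    intro h0; exact hx (by rw [h0, mul_zero, zero_mul])
  have key : ∀ M : ℕ, ‖∑' x : V, φ x * g x * ((m x).toReal : ℂ)‖ ≤
      4 * K * L + 2 * k0 *
        (lpNorm m 1 (fun x => g x - ∑ j ∈ Finset.range M, lam j * a j x)).toReal := by
    intro M
    set SM : V → ℂ := fun x => ∑ j ∈ Finset.range M, lam j * a j x with hSMdef
    have hSMsupp : (Function.support SM).Finite :=
      comb_supp_fin lam a M (fun j _ => hasupp j)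
    have hsummS : Summable (fun x => φ x * SM x * ((m x).toReal : ℂ)) := by
      refine summable_of_finite_support (hSMsupp.subset (fun x hx => ?_))
      simp only [Function.mem_support] at hx ⊢
      intro h0; exact hx (by rw [h0, mul_zero, zero_mul])
    have hdsupp : (Function.support fun x => g x - SM x).Finite := by
      refine (hg.union hSMsupp).subset (fun x hx => ?_)
      simp only [Function.mem_support] at hx
      by_contra hc
      simp only [Set.mem_union, Function.mem_support, not_or, not_not] at hc
      exact hx (by rw [hc.1, hc.2, sub_zero])
    have hSMpair : ∑' x : V, φ x * SM x * ((m x).toReal : ℂ)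
        = ∑ j ∈ Finset.range M, lam j * ∑' x : V, φ x * a j x * ((m x).toReal : ℂ) := by
      have h1 : ∀ x, φ x * SM x * ((m x).toReal : ℂ)
          = ∑ j ∈ Finset.range M, lam j * (φ x * a j x * ((m x).toReal : ℂ)) := by
        intro x
        rw [hSMdef]
        simp only []
        rw [Finset.mul_sum, Finset.sum_mul]
        exact Finset.sum_congr rfl (fun j _ => by ring)
      rw [tsum_congr h1, Summable.tsum_finsetSum (fun j _ => ?_)]
      · exact Finset.sum_congr rfl (fun j _ => tsum_mul_left)
      · refine summable_of_finite_support ((hasupp j).subset (fun x hx => ?_))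
        simp only [Function.mem_support] at hx ⊢
        intro h0; exact hx (by rw [h0, mul_zero, zero_mul, mul_zero])
    have hbound1 : ‖∑' x : V, φ x * SM x * ((m x).toReal : ℂ)‖ ≤ 4 * K * L := by
      rw [hSMpair]
      calc ‖∑ j ∈ Finset.range M, lam j * ∑' x : V, φ x * a j x * ((m x).toReal : ℂ)‖
          ≤ ∑ j ∈ Finset.range M, ‖lam j * ∑' x : V, φ x * a j x * ((m x).toReal : ℂ)‖ :=
            norm_sum_le _ _
        _ ≤ ∑ j ∈ Finset.range M, ‖lam j‖ * (4 * K) := by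
            refine Finset.sum_le_sum (fun j _ => ?_)
            rw [norm_mul]
            exact mul_le_mul_of_nonneg_left (atom_pair hm hφR (hatoms j)) (norm_nonneg _)
        _ = (∑ j ∈ Finset.range M, ‖lam j‖) * (4 * K) := (Finset.sum_mul _ _ _).symm
        _ ≤ L * (4 * K) := by
            refine mul_le_mul_of_nonneg_right
              (Summable.sum_le_tsum _ (fun _ _ => norm_nonneg _) hlsum) (by positivity)
        _ = 4 * K * L := by ring
    have hdiff : ∑' x : V, φ x * g x * ((m x).toReal : ℂ) -
        ∑' x : V, φ x * SM x * ((m x).toReal : ℂ)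
        = ∑' x : V, φ x * (g x - SM x) * ((m x).toReal : ℂ) := by
      rw [← Summable.tsum_sub hsummg hsummS]
      exact tsum_congr (fun x => by ring)
    have hnormsumm : Summable (fun x => ‖φ x * (g x - SM x) * ((m x).toReal : ℂ)‖) := by
      refine summable_of_finite_support (hdsupp.subset (fun x hx => ?_))
      simp only [Function.mem_support] at hx ⊢
      intro h0; exact hx (by rw [h0, mul_zero, zero_mul, norm_zero])
    have hbound2 : ‖∑' x : V, φ x * (g x - SM x) * ((m x).toReal : ℂ)‖ ≤
        2 * k0 * (lpNorm m 1 (fun x => g x - SM x)).toReal := by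
      calc ‖∑' x : V, φ x * (g x - SM x) * ((m x).toReal : ℂ)‖
          ≤ ∑' x : V, ‖φ x * (g x - SM x) * ((m x).toReal : ℂ)‖ :=
            norm_tsum_le_tsum_norm hnormsumm
        _ ≤ ∑' x : V, 2 * k0 * (‖g x - SM x‖ * (m x).toReal) := by
            refine Summable.tsum_le_tsum (fun x => ?_) hnormsumm ?_
            · rw [norm_mul, norm_mul, Complex.norm_real, Real.norm_eq_abs,
                abs_of_nonneg ENNReal.toReal_nonneg]
              calc ‖φ x‖ * ‖g x - SM x‖ * (m x).toReal
                  ≤ (2 * k0) * ‖g x - SM x‖ * (m x).toReal := by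
                    refine mul_le_mul_of_nonneg_right
                      (mul_le_mul_of_nonneg_right (hφb x) (norm_nonneg _))
                      ENNReal.toReal_nonneg
                _ = 2 * k0 * (‖g x - SM x‖ * (m x).toReal) := by ring
            · refine summable_of_finite_support (hdsupp.subset (fun x hx => ?_))
              simp only [Function.mem_support] at hx ⊢
              intro h0; exact hx (by rw [h0, norm_zero, zero_mul, mul_zero])
        _ = 2 * k0 * ∑' x : V, ‖g x - SM x‖ * (m x).toReal := tsum_mul_left
        _ = 2 * k0 * (lpNorm m 1 (fun x => g x - SM x)).toReal := by
            rw [lpNorm_one_toReal hm]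
    calc ‖∑' x : V, φ x * g x * ((m x).toReal : ℂ)‖
        = ‖∑' x : V, φ x * SM x * ((m x).toReal : ℂ) +
            (∑' x : V, φ x * g x * ((m x).toReal : ℂ) -
             ∑' x : V, φ x * SM x * ((m x).toReal : ℂ))‖ := by
          congr 1; ring
      _ ≤ ‖∑' x : V, φ x * SM x * ((m x).toReal : ℂ)‖ +
          ‖∑' x : V, φ x * g x * ((m x).toReal : ℂ) -
           ∑' x : V, φ x * SM x * ((m x).toReal : ℂ)‖ := norm_add_le _ _
      _ ≤ 4 * K * L + 2 * k0 * (lpNorm m 1 (fun x => g x - SM x)).toReal := by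
          rw [hdiff]
          exact add_le_add hbound1 hbound2
  have htend' : Filter.Tendsto (fun M =>
      (lpNorm m 1 (fun x => g x - ∑ j ∈ Finset.range M, lam j * a j x)).toReal)
      Filter.atTop (nhds 0) := by
    have h := (ENNReal.tendsto_toReal (by simp : (0:ℝ≥0∞) ≠ ⊤)).comp htend
    exact h
  have hfin : Filter.Tendsto (fun M => 4 * K * L + 2 * k0 *
      (lpNorm m 1 (fun x => g x - ∑ j ∈ Finset.range M, lam j * a j x)).toReal)
      Filter.atTop (nhds (4 * K * L)) := by
    have h2 := htend'.const_mul (2 * k0)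
    have h3 : Filter.Tendsto (fun _ : ℕ => 4 * K * L) Filter.atTop (nhds (4 * K * L)) :=
      tendsto_const_nhds
    have h4 := h3.add h2
    simpa using h4
  exact ge_of_tendsto' hfin key

end AuxProof2

/-- the duality pairing bound between `BMO(m)` and finite linear
combinations of `(1,∞)`-atoms. -/
theorem statement16 {V : Type u} [Countable V] [Infinite V] (T : Tree V)
    (β : ℝ) (hβ : 12 ≤ β) (m : V → ℝ≥0∞) (hm : IsFlow T m) (hld : LocDoubling T m)
    (c : ℝ) (hc : 1 < c)
    (hsons : ∀ x : V, ∀ y ∈ T.sons x, m x ≤ ENNReal.ofReal c * m y) :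
    ∃ C : ℝ, 0 < C ∧
      ∀ f : V → ℂ, oscNorm T β m 1 f ≠ ⊤ →
        ∀ (N : ℕ) (lam : ℕ → ℂ) (a : ℕ → V → ℂ),
          (∀ j ∈ Finset.range N, IsAtomInf T β m (a j)) →
          (‖intC m Set.univ (fun x => f x * ∑ j ∈ Finset.range N, lam j * a j x)‖₊ : ℝ≥0∞) ≤
            ENNReal.ofReal C * oscNorm T β m 1 f *
              hNorm m (IsAtomInf T β m)
                (fun x => ∑ j ∈ Finset.range N, lam j * a j x) := by
  refine ⟨4, by norm_num, ?_⟩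
  intro f hf N lam a ha
  set g : V → ℂ := fun x => ∑ j ∈ Finset.range N, lam j * a j x with hgdef
  have hgsupp : (Function.support g).Finite :=
    comb_supp_fin lam a N (fun j hj => atom_supp_fin (ha j hj))
  -- an explicit decomposition of `g`
  set lam0 : ℕ → ℂ := fun j => if j < N then lam j else 0 with hlam0
  set a0 : ℕ → V → ℂ := fun j => if j < N then a j else (fun _ => 0) with ha0
  have hzero_atom : IsAtomInf T β m (fun _ : V => (0:ℂ)) := by
    obtain ⟨v⟩ := (inferInstance : Nonempty V)
    refine ⟨{v}, Or.inl ⟨v, rfl⟩, fun x _ => rfl, ?_, ?_⟩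
    · simp [linfNorm]
    · simp [intC]
  have hatoms0 : ∀ j, IsAtomInf T β m (a0 j) := by
    intro j
    by_cases hj : j < N
    · simpa [ha0, hj] using ha j (Finset.mem_range.2 hj)
    · simpa [ha0, hj] using hzero_atom
  have hsumm0 : Summable (fun j => ‖lam0 j‖) := by
    refine summable_of_finite_support
      (((Finset.range N).finite_toSet).subset (fun j hj => ?_))
    simp only [Function.mem_support] at hj
    by_contra hc
    simp only [Finset.coe_range, Set.mem_Iio, not_lt] at hc
    have hnj : ¬ j < N := not_lt.2 hc
    exact hj (by simp [hlam0, hnj])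
  have hlp0 : lpNorm m 1 (fun _ : V => (0:ℂ)) = 0 := by
    have e1 : (1:ℝ)/1 = 1 := by norm_num
    rw [lpNorm, lpNormE, e1, ENNReal.rpow_one]
    simp
  have htend0 : Filter.Tendsto
      (fun M => lpNorm m 1 (fun x => g x - ∑ j ∈ Finset.range M, lam0 j * a0 j x))
      Filter.atTop (nhds (0 : ℝ≥0∞)) := by
    have hconst : Filter.Tendsto (fun _ : ℕ => (0:ℝ≥0∞)) Filter.atTop (nhds 0) :=
      tendsto_const_nhds
    refine Filter.Tendsto.congr' ?_ hconst
    refine Filter.eventually_atTop.2 ⟨N, fun M hM => ?_⟩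
    have hfun : (fun x => g x - ∑ j ∈ Finset.range M, lam0 j * a0 j x) =
        (fun _ : V => (0:ℂ)) := by
      funext x
      have hsub : Finset.range N ⊆ Finset.range M := Finset.range_subset_range.2 hM
      have h1 : ∑ j ∈ Finset.range N, lam0 j * a0 j x
          = ∑ j ∈ Finset.range M, lam0 j * a0 j x := by
        refine Finset.sum_subset hsub (fun j _ hj => ?_)
        have : ¬ j < N := fun h => hj (Finset.mem_range.2 h)
        simp [hlam0, this]
      have h2 : ∑ j ∈ Finset.range N, lam0 j * a0 j x
          = ∑ j ∈ Finset.range N, lam j * a j x := by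
        refine Finset.sum_congr rfl (fun j hj => ?_)
        have : j < N := Finset.mem_range.1 hj
        simp [hlam0, ha0, this]
      rw [← h1, h2, hgdef, sub_self]
    show (0:ℝ≥0∞) = lpNorm m 1 (fun x => g x - ∑ j ∈ Finset.range M, lam0 j * a0 j x)
    rw [hfun, hlp0]
  have hd0 : IsDecomp m (IsAtomInf T β m) g lam0 a0 := ⟨hatoms0, hsumm0, htend0⟩
  have hX : intC m Set.univ (fun x => f x * g x)
      = ∑' x : V, f x * g x * ((m x).toReal : ℂ) :=
    tsum_univ (fun x => f x * g x * ((m x).toReal : ℂ))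
  show (‖intC m Set.univ (fun x => f x * g x)‖₊ : ℝ≥0∞) ≤
    ENNReal.ofReal 4 * oscNorm T β m 1 f * hNorm m (IsAtomInf T β m) g
  have hle : ∀ p : {la : (ℕ → ℂ) × (ℕ → V → ℂ) //
      IsDecomp m (IsAtomInf T β m) g la.1 la.2},
      (‖intC m Set.univ (fun x => f x * g x)‖₊ : ℝ≥0∞) ≤
        ENNReal.ofReal 4 * oscNorm T β m 1 f * ENNReal.ofReal (∑' j, ‖p.1.1 j‖) := by
    intro p
    have hb := decomp_bound hm f hf g hgsupp p.1.1 p.1.2 p.2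
    rw [← hX] at hb
    calc (‖intC m Set.univ (fun x => f x * g x)‖₊ : ℝ≥0∞)
        = ENNReal.ofReal ‖intC m Set.univ (fun x => f x * g x)‖ :=
          (ofReal_norm _).symm
      _ ≤ ENNReal.ofReal (4 * (oscNorm T β m 1 f).toReal * ∑' j, ‖p.1.1 j‖) :=
          ENNReal.ofReal_le_ofReal hb
      _ = ENNReal.ofReal (4 * (oscNorm T β m 1 f).toReal) *
            ENNReal.ofReal (∑' j, ‖p.1.1 j‖) :=
          ENNReal.ofReal_mul (by positivity)
      _ = ENNReal.ofReal 4 * ENNReal.ofReal ((oscNorm T β m 1 f).toReal) *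
            ENNReal.ofReal (∑' j, ‖p.1.1 j‖) := by
          rw [ENNReal.ofReal_mul (by norm_num)]
      _ = ENNReal.ofReal 4 * oscNorm T β m 1 f * ENNReal.ofReal (∑' j, ‖p.1.1 j‖) := by
          rw [ENNReal.ofReal_toReal hf]
  set p0 : {la : (ℕ → ℂ) × (ℕ → V → ℂ) // IsDecomp m (IsAtomInf T β m) g la.1 la.2} :=
    ⟨(lam0, a0), hd0⟩ with hp0
  by_cases hosc : oscNorm T β m 1 f = 0
  · exact le_trans (hle p0) (by simp [hosc])
  · have hA0 : (ENNReal.ofReal 4 * oscNorm T β m 1 f) ≠ 0 :=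
      mul_ne_zero (ENNReal.ofReal_pos.2 (by norm_num)).ne' hosc
    have hAtop : (ENNReal.ofReal 4 * oscNorm T β m 1 f) ≠ ⊤ :=
      ENNReal.mul_ne_top ENNReal.ofReal_ne_top hf
    have hdivle : (‖intC m Set.univ (fun x => f x * g x)‖₊ : ℝ≥0∞) /
        (ENNReal.ofReal 4 * oscNorm T β m 1 f) ≤ hNorm m (IsAtomInf T β m) g := by
      refine le_iInf (fun p => ?_)
      refine (ENNReal.div_le_iff_le_mul (Or.inl hA0) (Or.inl hAtop)).2 ?_
      rw [mul_comm]
      exact hle p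
    have := (ENNReal.div_le_iff_le_mul (Or.inl hA0) (Or.inl hAtop)).1 hdivle
    calc (‖intC m Set.univ (fun x => f x * g x)‖₊ : ℝ≥0∞)
        ≤ hNorm m (IsAtomInf T β m) g * (ENNReal.ofReal 4 * oscNorm T β m 1 f) := this
      _ = ENNReal.ofReal 4 * oscNorm T β m 1 f * hNorm m (IsAtomInf T β m) g :=
          mul_comm _ _

end FlowPaper
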